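/- arXiv:2411.13646 — 6 statements merged into one kernel-verified Lean document; each statement's English description precedes it below -/
import Mathlib

section
/- Let m ≥ 4 be even. Then every diagonal entry G_ii of the Gram matrix G of the Barnes-Wall lattice BW(m) is divisible by 4, and every off-diagonal entry G_ij that is odd satisfies p(i) = p(j) = 0. -/
open Matrix

/-- `bwBit i a` is the `a`-th binary digit of `i`. -/
def bwBit (i a : ℕ) : ℕ := i / 2 ^ a % 2

/-- `bwPar m i` is the number of zero digits in the length-`m` binary expansion of `i`, mod 2. -/
def bwPar (m i : ℕ) : ℕ := ((Finset.range m).filter fun a => bwBit i a = 0).card % 2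

/-- The exponent of `√2` in the `(i,j)` entry of the Gram matrix of `BW(m)`. -/
def bwExp (m i j : ℕ) : ℤ :=
  (bwPar m i : ℤ) + (bwPar m j : ℤ) - 2 * (((m + 1) / 2 : ℕ) : ℤ) +
    ∑ l ∈ Finset.range m,
      (2 * (bwBit i l : ℤ) * (bwBit j l : ℤ) - (bwBit i l : ℤ) - (bwBit j l : ℤ) + 2)

/-- The Gram matrix of the Barnes-Wall lattice `BW(m)`:
`G i j = (w_i, w_j) = √2 ^ (p i + p j - 2⌈m/2⌉ + ∑ (2 i[l] j[l] - i[l] - j[l] + 2))`. -/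
noncomputable def bwGram (m : ℕ) : Matrix (Fin (2 ^ m)) (Fin (2 ^ m)) ℝ :=
  Matrix.of fun i j => Real.sqrt 2 ^ bwExp m (i : ℕ) (j : ℕ)

/-! An odd integer is `√2 ^ n` only for `n = 0`: for even `n` it is `2 ^ (n / 2)`, for odd `n`
it is irrational. For even `m` the normalisation `2⌈m/2⌉` equals `m`, and each digit term
`2ab - a - b + 2` is at least `1` and equals `2` when `a = b`. So the diagonal exponent is
`2 p(i) + m` and every exponent is at least `p(i) + p(j)`. -/

theorem eq_zero_of_sqrt_two_pow_eq_odd_int {n : ℕ} {z : ℤ} (hz : Odd z) (h : √2 ^ n = z) :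
    n = 0 := by
  obtain ⟨s, rfl | rfl⟩ := Nat.even_or_odd' n
  · rw [pow_mul, Real.sq_sqrt zero_le_two] at h
    have h2s : (2 : ℤ) ^ s = z := by exact_mod_cast h
    have hs := (Int.odd_pow.mp (h2s ▸ hz)).resolve_left (by decide)
    omega
  · have hirr : Irrational (((2 ^ s : ℕ) : ℚ) * √2) :=
      irrational_sqrt_two.ratCast_mul (by positivity)
    refine absurd ?_ (hirr.ne_int z)
    rw [← h, pow_succ, pow_mul, Real.sq_sqrt zero_le_two]
    push_cast
    ring

lemma bwBit_le_one (i a : ℕ) : bwBit i a ≤ 1 :=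
  Nat.le_of_lt_succ (Nat.mod_lt _ two_pos)

lemma ceil_half_mul_two_of_even {m : ℕ} (hm : Even m) : ((m + 1) / 2) * 2 = m := by
  obtain ⟨t, rfl⟩ := hm
  omega

lemma bwExp_self {m : ℕ} (hm : Even m) (i : ℕ) :
    bwExp m i i = (2 * (bwPar m i + m / 2) : ℕ) := by
  have hterm : ∀ l ∈ Finset.range m,
      2 * (bwBit i l : ℤ) * bwBit i l - bwBit i l - bwBit i l + 2 = 2 := by
    intro l _
    rcases Nat.le_one_iff_eq_zero_or_eq_one.mp (bwBit_le_one i l) with h | h <;> simp [h]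
  have hhalf := ceil_half_mul_two_of_even hm
  rw [bwExp, Finset.sum_congr rfl hterm, Finset.sum_const, Finset.card_range, nsmul_eq_mul]
  push_cast
  omega

lemma bwPar_add_bwPar_le_bwExp {m : ℕ} (hm : Even m) (i j : ℕ) :
    (bwPar m i + bwPar m j : ℤ) ≤ bwExp m i j := by
  have hsum : (m : ℤ) ≤ ∑ l ∈ Finset.range m,
      (2 * (bwBit i l : ℤ) * bwBit j l - bwBit i l - bwBit j l + 2) := by
    calc (m : ℤ) = ∑ _l ∈ Finset.range m, (1 : ℤ) := by simp
      _ ≤ _ := Finset.sum_le_sum fun l _ => by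
        rcases Nat.le_one_iff_eq_zero_or_eq_one.mp (bwBit_le_one i l) with h | h <;>
          rcases Nat.le_one_iff_eq_zero_or_eq_one.mp (bwBit_le_one j l) with h' | h' <;>
          simp [h, h']
  have hhalf := ceil_half_mul_two_of_even hm
  rw [bwExp]
  omega

lemma bwGram_apply_self {m : ℕ} (hm : Even m) (i : Fin (2 ^ m)) :
    bwGram m i i = 2 ^ (bwPar m i + m / 2) := by
  rw [bwGram, of_apply, bwExp_self hm, zpow_natCast, pow_mul, Real.sq_sqrt zero_le_two]

/-- Lemma (Gram matrix of `BW(m)`, `m ≥ 4` even): every diagonal entry of the Gram matrix is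
divisible by `4`, and any odd off-diagonal entry forces `p(i) = p(j) = 0`. -/
theorem bwGram_even_case (m : ℕ) (hm : 4 ≤ m) (hme : Even m) :
    (∀ i : Fin (2 ^ m), ∃ k : ℤ, bwGram m i i = 4 * k) ∧
    (∀ i j : Fin (2 ^ m), i ≠ j → (∃ k : ℤ, bwGram m i j = 2 * k + 1) →
      bwPar m (i : ℕ) = 0 ∧ bwPar m (j : ℕ) = 0) := by
  constructor
  · intro i
    obtain ⟨d, hd⟩ := Nat.exists_eq_add_of_le (show 2 ≤ bwPar m i + m / 2 by omega)
    refine ⟨2 ^ d, ?_⟩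
    rw [bwGram_apply_self hme, hd, pow_add]
    push_cast
    ring
  · rintro i j - ⟨k, hk⟩
    have hle := bwPar_add_bwPar_le_bwExp hme i j
    obtain ⟨n, hn⟩ : ∃ n : ℕ, bwExp m i j = n := Int.eq_ofNat_of_zero_le (by omega)
    have hn0 : n = 0 := by
      refine eq_zero_of_sqrt_two_pow_eq_odd_int (odd_two_mul_add_one k) ?_
      rw [← zpow_natCast, ← hn]
      exact_mod_cast hk
    omega
end

section
/- Let m ≥ 5 be odd. Then every diagonal entry G_ii of the Gram matrix G of the Barnes-Wall lattice BW(m) is divisible by 4, and every entry G_ij that is odd satisfies either that i and j are complementary (i.e. i[a] = 1 − j[a] for all a = 0,…,m−1) or that p(i) = p(j) = 0. Equivalently, G can be written as G¹ + G², where G¹_{ij} is odd only if i and j are complementary and G²_{ij} is odd only if p(i) = p(j) = 0. -/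
open Matrix

/- ### Auxiliary definitions and lemmas -/

lemma bwBit_cases (i a : ℕ) : bwBit i a = 0 ∨ bwBit i a = 1 := by
  have : bwBit i a < 2 := Nat.mod_lt _ two_pos
  omega

/-- The number of positions `l < m` where the bits of `i` and `j` differ. -/
def bwD (m i j : ℕ) : ℕ := ((Finset.range m).filter fun l => ¬ bwBit i l = bwBit j l).card

/-- The number of zero bits among the first `m` bits of `i`. -/
def bwZ (m i : ℕ) : ℕ := ((Finset.range m).filter fun a => bwBit i a = 0).card

lemma bwPar_eq (m i : ℕ) : bwPar m i = bwZ m i % 2 := rfl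

lemma bwD_le (m i j : ℕ) : bwD m i j ≤ m :=
  le_trans (Finset.card_filter_le _ _) (le_of_eq (Finset.card_range m))

lemma bwSum_eq (m i j : ℕ) :
    (∑ l ∈ Finset.range m,
      (2 * (bwBit i l : ℤ) * (bwBit j l : ℤ) - (bwBit i l : ℤ) - (bwBit j l : ℤ) + 2))
      = 2 * m - bwD m i j := by
  have h : ∀ l ∈ Finset.range m,
      (2 * (bwBit i l : ℤ) * (bwBit j l : ℤ) - (bwBit i l : ℤ) - (bwBit j l : ℤ) + 2)
      = 2 - (if ¬ bwBit i l = bwBit j l then (1 : ℤ) else 0) := by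
    intro l _
    rcases bwBit_cases i l with h1 | h1 <;> rcases bwBit_cases j l with h2 | h2 <;>
      simp [h1, h2]
  rw [Finset.sum_congr rfl h, Finset.sum_sub_distrib, Finset.sum_const, Finset.sum_boole]
  simp [bwD, mul_comm]

lemma bwParity (m i j : ℕ) : 2 ∣ (bwZ m i + bwZ m j + bwD m i j) := by
  have h1 : bwZ m i = ∑ l ∈ Finset.range m, (if bwBit i l = 0 then 1 else 0) :=
    Finset.card_filter _ _
  have h2 : bwZ m j = ∑ l ∈ Finset.range m, (if bwBit j l = 0 then 1 else 0) :=
    Finset.card_filter _ _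
  have h3 : bwD m i j = ∑ l ∈ Finset.range m, (if ¬ bwBit i l = bwBit j l then 1 else 0) :=
    Finset.card_filter _ _
  rw [h1, h2, h3, ← Finset.sum_add_distrib, ← Finset.sum_add_distrib]
  refine Finset.dvd_sum fun l _ => ?_
  rcases bwBit_cases i l with hi | hi <;> rcases bwBit_cases j l with hj | hj <;> simp [hi, hj]

lemma bwExp_eq (m i j : ℕ) : bwExp m i j =
    ((bwZ m i % 2 : ℕ) : ℤ) + ((bwZ m j % 2 : ℕ) : ℤ) - 2 * (((m + 1) / 2 : ℕ) : ℤ)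
      + (2 * m - bwD m i j) := by
  rw [bwExp, bwSum_eq]
  rfl

/-- The value of each entry of the Gram matrix: a nonnegative power of `2`. -/
lemma bwGram_val (m : ℕ) (hmo : Odd m) (i j : ℕ) :
    ∃ n : ℕ, bwExp m i j = 2 * n ∧ Real.sqrt 2 ^ bwExp m i j = ((2 ^ n : ℤ) : ℝ) := by
  have hD := bwD_le m i j
  have hpar := bwParity m i j
  obtain ⟨t, ht⟩ := hmo
  have hexp := bwExp_eq m i j
  have hmod : bwZ m i % 2 < 2 := Nat.mod_lt _ two_pos
  have hmod' : bwZ m j % 2 < 2 := Nat.mod_lt _ two_pos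
  obtain ⟨n, hn⟩ : ∃ n : ℕ, bwExp m i j = 2 * (n : ℤ) :=
    ⟨(bwExp m i j).toNat / 2, by omega⟩
  refine ⟨n, hn, ?_⟩
  rw [hn, show (2 * (n : ℤ)) = ((2 * n : ℕ) : ℤ) by push_cast; ring, zpow_natCast, pow_mul,
    Real.sq_sqrt (by norm_num : (0:ℝ) ≤ 2)]
  push_cast
  ring

lemma bwGram_apply (m : ℕ) (i j : Fin (2 ^ m)) :
    bwGram m i j = Real.sqrt 2 ^ bwExp m (i : ℕ) (j : ℕ) := rfl

/-- An odd entry has exponent zero. -/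
lemma bwExp_eq_zero_of_odd (m : ℕ) (hmo : Odd m) (i j : ℕ) (k : ℤ)
    (h : Real.sqrt 2 ^ bwExp m i j = 2 * k + 1) : bwExp m i j = 0 := by
  obtain ⟨n, hn, hval⟩ := bwGram_val m hmo i j
  rw [hval] at h
  have h' : (2 : ℤ) ^ n = 2 * k + 1 := by exact_mod_cast h
  cases n with
  | zero => simpa using hn
  | succ s =>
    exfalso
    have h2 : (2 : ℤ) ^ (s + 1) = 2 * 2 ^ s := by ring
    rw [h2] at h'
    omega

/-- Structure of odd entries. -/
lemma bwOdd_structure (m : ℕ) (hmo : Odd m) (i j : ℕ) (h : bwExp m i j = 0) :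
    (∀ a < m, bwBit i a = 1 - bwBit j a) ∨ (bwPar m i = 0 ∧ bwPar m j = 0) := by
  have hD := bwD_le m i j
  have hpar := bwParity m i j
  obtain ⟨t, ht⟩ := hmo
  have hexp := bwExp_eq m i j
  have hmod : bwZ m i % 2 < 2 := Nat.mod_lt _ two_pos
  have hmod' : bwZ m j % 2 < 2 := Nat.mod_lt _ two_pos
  by_cases hp : bwZ m i % 2 = 0 ∧ bwZ m j % 2 = 0
  · right
    rw [bwPar_eq, bwPar_eq]
    exact hp
  · left
    have hDm : bwD m i j = m := by omega
    have hfe : (Finset.range m).filter (fun l => ¬ bwBit i l = bwBit j l) = Finset.range m :=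
      Finset.eq_of_subset_of_card_le (Finset.filter_subset _ _)
        (by rw [Finset.card_range]; exact le_of_eq hDm.symm)
    intro a ha
    have hmem : a ∈ Finset.range m := Finset.mem_range.mpr ha
    rw [← hfe] at hmem
    have hne := (Finset.mem_filter.mp hmem).2
    rcases bwBit_cases i a with h1 | h1 <;> rcases bwBit_cases j a with h2 | h2 <;> omega

/-- Lemma (Gram matrix of `BW(m)`, `m ≥ 5` odd): every diagonal entry is divisible by `4`, any
odd entry forces `i` and `j` to be complementary or `p(i) = p(j) = 0`; equivalently `G` splits
as `G¹ + G²` where odd entries of `G¹` occur only at complementary pairs and odd entries of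
`G²` only where `p(i) = p(j) = 0`. -/
theorem bwGram_odd_case (m : ℕ) (hm : 5 ≤ m) (hmo : Odd m) :
    (∀ i : Fin (2 ^ m), ∃ k : ℤ, bwGram m i i = 4 * k) ∧
    (∀ i j : Fin (2 ^ m), (∃ k : ℤ, bwGram m i j = 2 * k + 1) →
      (∀ a < m, bwBit (i : ℕ) a = 1 - bwBit (j : ℕ) a) ∨
        (bwPar m (i : ℕ) = 0 ∧ bwPar m (j : ℕ) = 0)) ∧
    (∃ G1 G2 : Matrix (Fin (2 ^ m)) (Fin (2 ^ m)) ℝ,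
      bwGram m = G1 + G2 ∧
      (∀ i j, ∃ k : ℤ, G1 i j = k) ∧ (∀ i j, ∃ k : ℤ, G2 i j = k) ∧
      (∀ i j : Fin (2 ^ m), (∃ k : ℤ, G1 i j = 2 * k + 1) →
        ∀ a < m, bwBit (i : ℕ) a = 1 - bwBit (j : ℕ) a) ∧
      (∀ i j : Fin (2 ^ m), (∃ k : ℤ, G2 i j = 2 * k + 1) →
        bwPar m (i : ℕ) = 0 ∧ bwPar m (j : ℕ) = 0)) := by
  classical
  obtain ⟨t, htm⟩ := hmo
  refine ⟨?_, ?_, ?_⟩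
  · -- diagonal divisible by 4
    intro i
    obtain ⟨n, hn, hval⟩ := bwGram_val m ⟨t, htm⟩ (i : ℕ) (i : ℕ)
    have hD0 : bwD m (i : ℕ) (i : ℕ) = 0 := by simp [bwD]
    have hexp := bwExp_eq m (i : ℕ) (i : ℕ)
    have hn2 : 2 ≤ n := by omega
    refine ⟨2 ^ (n - 2), ?_⟩
    rw [bwGram_apply, hval]
    have : n = (n - 2) + 2 := by omega
    rw [this, pow_add]
    push_cast
    ring
  · -- odd entries
    intro i j ⟨k, hk⟩
    rw [bwGram_apply] at hk
    exact bwOdd_structure m ⟨t, htm⟩ _ _ (bwExp_eq_zero_of_odd m ⟨t, htm⟩ _ _ k hk)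
  · -- splitting
    refine ⟨Matrix.of fun i j =>
        if (∀ a < m, bwBit (i : ℕ) a = 1 - bwBit (j : ℕ) a) then bwGram m i j else 0,
      Matrix.of fun i j =>
        bwGram m i j -
          (if (∀ a < m, bwBit (i : ℕ) a = 1 - bwBit (j : ℕ) a) then bwGram m i j else 0),
      ?_, ?_, ?_, ?_, ?_⟩
    · ext i j
      simp only [Matrix.add_apply, Matrix.of_apply]
      ring
    · intro i j
      by_cases h : ∀ a < m, bwBit (i : ℕ) a = 1 - bwBit (j : ℕ) a
      · obtain ⟨n, hn, hval⟩ := bwGram_val m ⟨t, htm⟩ (i : ℕ) (j : ℕ)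
        refine ⟨2 ^ n, ?_⟩
        simp only [Matrix.of_apply, if_pos h]
        rw [bwGram_apply, hval]
      · exact ⟨0, by simp only [Matrix.of_apply, if_neg h]; simp⟩
    · intro i j
      by_cases h : ∀ a < m, bwBit (i : ℕ) a = 1 - bwBit (j : ℕ) a
      · exact ⟨0, by simp only [Matrix.of_apply, if_pos h, sub_self]; simp⟩
      · obtain ⟨n, hn, hval⟩ := bwGram_val m ⟨t, htm⟩ (i : ℕ) (j : ℕ)
        refine ⟨2 ^ n, ?_⟩
        simp only [Matrix.of_apply, if_neg h, sub_zero]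
        rw [bwGram_apply, hval]
    · intro i j ⟨k, hk⟩
      by_cases h : ∀ a < m, bwBit (i : ℕ) a = 1 - bwBit (j : ℕ) a
      · exact h
      · exfalso
        simp only [Matrix.of_apply, if_neg h] at hk
        have : ((2 * k + 1 : ℤ) : ℝ) = 0 := by push_cast; linarith
        have h0 : (2 * k + 1 : ℤ) = 0 := by exact_mod_cast this
        omega
    · intro i j ⟨k, hk⟩
      by_cases h : ∀ a < m, bwBit (i : ℕ) a = 1 - bwBit (j : ℕ) a
      · exfalso
        simp only [Matrix.of_apply, if_pos h, sub_self] at hk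
        have : ((2 * k + 1 : ℤ) : ℝ) = 0 := by push_cast; linarith
        have h0 : (2 * k + 1 : ℤ) = 0 := by exact_mod_cast this
        omega
      · simp only [Matrix.of_apply, if_neg h, sub_zero, bwGram_apply] at hk
        have hz := bwExp_eq_zero_of_odd m ⟨t, htm⟩ _ _ k hk
        rcases bwOdd_structure m ⟨t, htm⟩ _ _ hz with hc | hp
        · exact absurd hc h
        · exact hp
end

section
/- Let m ≥ 2. Modulo 2, each matrix A_{ar} = Σ_{ar} − I (in the Barnes-Wall lattice basis) maps the span of the basis vectors of parity p(i) = 0 into the span of those of parity p(i) = 1 and annihilates the latter; consequently A_{ar} A_{bs} ≡ 0 (mod 2) for all a,b ∈ {1,…,m} and r,s ∈ {1,2}. -/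
open Matrix

/-- The matrix of the lattice automorphism `Σ_{ar}` of `BW(m)` in the basis `w_i`
(acting on row vectors from the right); `r = 1` gives `Σ_{a1}`, any other `r` gives `Σ_{a2}`. -/
def bwSigma (m a r : ℕ) : Matrix (Fin (2 ^ m)) (Fin (2 ^ m)) ℤ :=
  Matrix.of fun i j =>
    if r = 1 then
      if bwBit (i : ℕ) (m - a) = 0 then
        (if j = i then -1 else 0) +
          (if (j : ℕ) = (i : ℕ) + 2 ^ (m - a) then 2 ^ bwPar m (i : ℕ) else 0)
      else if j = i then 1 else 0
    else
      if bwBit (i : ℕ) (m - a) = 1 then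
        (if j = i then -1 else 0) +
          (if (j : ℕ) + 2 ^ (m - a) = (i : ℕ) then 2 ^ bwPar m (i : ℕ) else 0)
      else if j = i then 1 else 0

/-- `A_{ar} = Σ_{ar} - I`. -/
def bwA (m a r : ℕ) : Matrix (Fin (2 ^ m)) (Fin (2 ^ m)) ℤ := bwSigma m a r - 1

lemma bwBit_lt_two (i a : ℕ) : bwBit i a < 2 := Nat.mod_lt _ (by norm_num)

lemma bwBit_eq_zero_iff {i a : ℕ} : bwBit i a = 0 ↔ i.testBit a = false := by
  rw [Nat.testBit_eq_decide_div_mod_eq]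
  have := bwBit_lt_two i a
  unfold bwBit at *
  simp only [decide_eq_false_iff_not]
  omega

lemma bwTestBit_add_two_pow {i c : ℕ} (h : i.testBit c = false) (l : ℕ) :
    (i + 2 ^ c).testBit l = if l = c then true else i.testBit l := by
  have hd : 2 ^ (c + 1) * (i / 2 ^ (c + 1)) + i % 2 ^ (c + 1) = i :=
    Nat.div_add_mod i (2 ^ (c + 1))
  set q := i / 2 ^ (c + 1) with hq
  set lo := i % 2 ^ (c + 1) with hlo
  have hlo2 : lo < 2 ^ (c + 1) := Nat.mod_lt _ (by positivity)
  have hloc0 : lo.testBit c = false := by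
    rw [hlo, Nat.testBit_mod_two_pow]
    simp [h]
  have hloc : lo < 2 ^ c := by
    rcases Nat.lt_or_ge lo (2 ^ c) with h' | h'
    · exact h'
    · exfalso
      have h1 : lo = 2 ^ c + (lo - 2 ^ c) := by omega
      have h2 : lo - 2 ^ c < 2 ^ c := by
        have : 2 ^ (c + 1) = 2 ^ c + 2 ^ c := by ring
        omega
      have := Nat.testBit_two_pow_add_eq (lo - 2 ^ c) c
      rw [← h1, hloc0, Nat.testBit_lt_two_pow h2] at this
      simp at this
  have hi : i = 2 ^ (c + 1) * q + lo := hd.symm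
  have hi' : i + 2 ^ c = 2 ^ (c + 1) * q + (lo + 2 ^ c) := by omega
  have hlt : lo + 2 ^ c < 2 ^ (c + 1) := by
    have : 2 ^ (c + 1) = 2 ^ c + 2 ^ c := by ring
    omega
  rw [hi', Nat.testBit_two_pow_mul_add q hlt l]
  conv_rhs => rw [hi]
  rw [Nat.testBit_two_pow_mul_add q hlo2 l]
  rcases lt_trichotomy l c with hl | hl | hl
  · have h1 : l < c + 1 := by omega
    have h2 : l ≠ c := by omega
    simp only [if_pos h1, if_neg h2]
    rw [add_comm lo (2 ^ c), Nat.testBit_two_pow_add_gt hl]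
  · subst hl
    simp only [if_pos (Nat.lt_succ_self l), if_pos rfl]
    rw [add_comm lo (2 ^ l), Nat.testBit_two_pow_add_eq, Nat.testBit_lt_two_pow hloc]
    rfl
  · have h1 : ¬ l < c + 1 := by omega
    have h2 : l ≠ c := by omega
    simp only [if_neg h1, if_neg h2]

lemma bwBit_add_two_pow {i c : ℕ} (h : bwBit i c = 0) (l : ℕ) :
    bwBit (i + 2 ^ c) l = if l = c then 1 else bwBit i l := by
  rw [bwBit_eq_zero_iff] at h
  have h2 := bwTestBit_add_two_pow h l
  have e1 := bwBit_lt_two (i + 2 ^ c) l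
  have e2 := bwBit_lt_two i l
  rw [Nat.testBit_eq_decide_div_mod_eq, Nat.testBit_eq_decide_div_mod_eq] at h2
  unfold bwBit at *
  split at h2 <;> split <;> simp_all <;> omega

lemma bwPar_add_two_pow {m i c : ℕ} (hc : c < m) (h : bwBit i c = 0) :
    bwPar m (i + 2 ^ c) = (bwPar m i + 1) % 2 := by
  have hset : ((Finset.range m).filter fun a => bwBit (i + 2 ^ c) a = 0) =
      ((Finset.range m).filter fun a => bwBit i a = 0).erase c := by
    ext l
    simp only [Finset.mem_erase, Finset.mem_filter, Finset.mem_range, bwBit_add_two_pow h l]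
    rcases eq_or_ne l c with rfl | hl
    · simp
    · simp [hl]
  have hmem : c ∈ (Finset.range m).filter fun a => bwBit i a = 0 := by
    simp [Finset.mem_filter, hc, h]
  have hcard : (((Finset.range m).filter fun a => bwBit i a = 0).erase c).card =
      ((Finset.range m).filter fun a => bwBit i a = 0).card - 1 :=
    Finset.card_erase_of_mem hmem
  have hpos : 1 ≤ ((Finset.range m).filter fun a => bwBit i a = 0).card :=
    Finset.card_pos.mpr ⟨c, hmem⟩
  unfold bwPar
  rw [hset, hcard]
  omega

lemma bwPar_lt_two (m i : ℕ) : bwPar m i < 2 := Nat.mod_lt _ (by norm_num)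

/-- Rows of parity 1 of `A_{ar}` vanish mod 2. -/
lemma bwA_row (m a r : ℕ) (i j : Fin (2 ^ m)) (hp : bwPar m (i : ℕ) = 1) :
    ((bwA m a r i j : ℤ) : ZMod 2) = 0 := by
  rw [ZMod.intCast_zmod_eq_zero_iff_dvd]
  simp only [bwA, Matrix.sub_apply, Matrix.one_apply, bwSigma, Matrix.of_apply]
  split_ifs
  all_goals try subst_vars
  all_goals try rw [hp]
  all_goals first
    | omega
    | exact absurd rfl ‹¬ i = i›
    | exact absurd rfl ‹¬ j = j›

/-- Columns of parity 0 of `A_{ar}` vanish mod 2 (when `1 ≤ a ≤ m`). -/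
lemma bwA_col (m a r : ℕ) (ha : 1 ≤ a) (ha' : a ≤ m) (i j : Fin (2 ^ m))
    (hp : bwPar m (j : ℕ) = 0) :
    ((bwA m a r i j : ℤ) : ZMod 2) = 0 := by
  have h01 : bwPar m (i : ℕ) = 0 ∨ bwPar m (i : ℕ) = 1 := by
    have := bwPar_lt_two m (i : ℕ); omega
  rcases h01 with hpi | hpi
  · have hc : m - a < m := by omega
    have key1 : bwBit (i : ℕ) (m - a) = 0 → (j : ℕ) = (i : ℕ) + 2 ^ (m - a) → False := by
      intro hb hj
      have h := bwPar_add_two_pow hc hb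
      rw [← hj, hp, hpi] at h
      simp at h
    have key2 : bwBit (i : ℕ) (m - a) = 1 → (j : ℕ) + 2 ^ (m - a) = (i : ℕ) → False := by
      intro hb hj
      have hbj : bwBit (j : ℕ) (m - a) = 0 := by
        rw [bwBit_eq_zero_iff]
        have h := Nat.testBit_two_pow_add_eq (j : ℕ) (m - a)
        rw [add_comm, hj] at h
        have hbi' : (i : ℕ).testBit (m - a) = true := by
          rw [Nat.testBit_eq_decide_div_mod_eq]
          unfold bwBit at hb
          simp [hb]
        rw [hbi'] at h
        simpa using h.symm
      have h := bwPar_add_two_pow hc hbj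
      rw [hj, hp, hpi] at h
      simp at h
    rw [ZMod.intCast_zmod_eq_zero_iff_dvd]
    simp only [bwA, Matrix.sub_apply, Matrix.one_apply, bwSigma, Matrix.of_apply]
    split_ifs
    all_goals first
      | (exfalso; exact key1 ‹_› ‹_›)
      | (exfalso; exact key2 ‹_› ‹_›)
      | omega
      | (subst_vars; first
          | omega
          | exact absurd rfl ‹¬ i = i›
          | exact absurd rfl ‹¬ j = j›)
  · exact bwA_row m a r i j hpi

/-- Modulo 2, each `A_{ar} = Σ_{ar} - I` annihilates the span of the basis vectors of parity 1
and maps everything into the span of the basis vectors of parity 1 (in particular it kills the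
parity-0 columns); consequently `A_{ar} A_{bs} ≡ 0 (mod 2)`. -/
theorem bwA_nilpotent_mod_two (m : ℕ) (hm : 2 ≤ m) (a b r s : ℕ)
    (ha : 1 ≤ a) (ha' : a ≤ m) (hb : 1 ≤ b) (hb' : b ≤ m)
    (hr : r = 1 ∨ r = 2) (hs : s = 1 ∨ s = 2) :
    (∀ i j : Fin (2 ^ m), bwPar m (i : ℕ) = 1 → ((bwA m a r i j : ℤ) : ZMod 2) = 0) ∧
    (∀ i j : Fin (2 ^ m), bwPar m (j : ℕ) = 0 → ((bwA m a r i j : ℤ) : ZMod 2) = 0) ∧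
    (bwA m a r).map (Int.cast : ℤ → ZMod 2) * (bwA m b s).map (Int.cast : ℤ → ZMod 2) = 0 := by
  refine ⟨fun i j hp => bwA_row m a r i j hp, fun i j hp => bwA_col m a r ha ha' i j hp, ?_⟩
  ext i k
  simp only [Matrix.mul_apply, Matrix.map_apply, Matrix.zero_apply]
  apply Finset.sum_eq_zero
  intro j _
  have h01 : bwPar m (j : ℕ) = 0 ∨ bwPar m (j : ℕ) = 1 := by
    have := bwPar_lt_two m (j : ℕ); omega
  rcases h01 with hpj | hpj
  · rw [bwA_col m a r ha ha' i j hpj, zero_mul]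
  · rw [bwA_row m b s j k hpj, mul_zero]
end

section
/- Let m ≥ 4 be even. Then u_{Σ_{ar}}(α) = 1 for all α ∈ ℤ^{2^m}, all a = 1,…,m, and all r = 1,2. Equivalently, all entries of H − Σ_{ar} H Σ_{ar}ᵀ below the diagonal are even. -/
open Matrix

/-- The half-Gram matrix `H` of `BW(m)`: `H i j = G i j` for `i > j`, `G i i / 2` on the
diagonal, and `0` above the diagonal. -/
noncomputable def bwH (m : ℕ) : Matrix (Fin (2 ^ m)) (Fin (2 ^ m)) ℝ :=
  Matrix.of fun i j =>
    if j < i then Real.sqrt 2 ^ bwExp m (i : ℕ) (j : ℕ)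
    else if i = j then Real.sqrt 2 ^ (bwExp m (i : ℕ) (i : ℕ) - 2)
    else 0

/-- The matrix `H - Σ H Σᵀ` underlying the bilinear form `B_Σ`. -/
noncomputable def bwBMat (m : ℕ) (S : Matrix (Fin (2 ^ m)) (Fin (2 ^ m)) ℤ) :
    Matrix (Fin (2 ^ m)) (Fin (2 ^ m)) ℝ :=
  bwH m - S.map (Int.cast : ℤ → ℝ) * bwH m * (S.map (Int.cast : ℤ → ℝ))ᵀ

/-- The bilinear form `B_Σ(α, β) = ∑_{i > j} α_i β_j (H - Σ H Σᵀ)_{ij}`. -/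
noncomputable def bwBQuad (m : ℕ) (S : Matrix (Fin (2 ^ m)) (Fin (2 ^ m)) ℤ)
    (α β : Fin (2 ^ m) → ℤ) : ℝ :=
  ∑ i, ∑ j, if j < i then (α i : ℝ) * (β j : ℝ) * bwBMat m S i j else 0

/-- `u_Σ(α) = (-1)^{B_Σ(α,α)}`, rendered as `cos (π B_Σ(α,α))`, which agrees with
`(-1)^k` whenever `B_Σ(α,α)` is the integer `k`. -/
noncomputable def bwU (m : ℕ) (S : Matrix (Fin (2 ^ m)) (Fin (2 ^ m)) ℤ)
    (α : Fin (2 ^ m) → ℤ) : ℝ :=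
  Real.cos (Real.pi * bwBQuad m S α α)

lemma bwBit_add_two_pow_self (k b : ℕ) : bwBit (k + 2 ^ b) b = 1 - bwBit k b := by
  unfold bwBit
  rw [Nat.add_div_right _ (Nat.two_pow_pos b)]
  omega

lemma bwBit_add_two_pow_of_ne {k b l : ℕ} (hk : bwBit k b = 0) (hl : l ≠ b) :
    bwBit (k + 2 ^ b) l = bwBit k l := by
  unfold bwBit at *
  rcases Nat.lt_or_gt_of_ne hl with h | h
  · obtain ⟨c, rfl⟩ := Nat.exists_eq_add_of_lt h
    rw [show 2 ^ (l + c + 1) = 2 ^ (c + 1) * 2 ^ l by ring,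
      Nat.add_mul_div_right _ _ (Nat.two_pow_pos l), pow_succ]
    omega
  · obtain ⟨c, rfl⟩ := Nat.exists_eq_add_of_lt h
    have hcarry : (k + 2 ^ b) / 2 ^ b / 2 = k / 2 ^ b / 2 := by
      rw [Nat.add_div_right _ (Nat.two_pow_pos b)]
      omega
    simp only [show 2 ^ (b + c + 1) = 2 ^ b * 2 * 2 ^ c by ring, ← Nat.div_div_eq_div_mul,
      hcarry]

lemma bwPar_le_one (m i : ℕ) : bwPar m i ≤ 1 := by
  unfold bwPar; omega

lemma bwPar_add_two_pow_s3 {m k b : ℕ} (hb : b < m) (hk : bwBit k b = 0) :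
    bwPar m (k + 2 ^ b) + bwPar m k = 1 := by
  have hmem : b ∈ (Finset.range m).filter fun l => bwBit k l = 0 := by simp [hb, hk]
  have hzeros : ((Finset.range m).filter fun l => bwBit (k + 2 ^ b) l = 0) =
      ((Finset.range m).filter fun l => bwBit k l = 0).erase b := by
    ext l
    by_cases hl : l = b
    · simp [hl, bwBit_add_two_pow_self, hk]
    · simp [hl, bwBit_add_two_pow_of_ne hk hl]
  have hpos := Finset.card_pos.mpr ⟨b, hmem⟩
  unfold bwPar
  rw [hzeros, Finset.card_erase_of_mem hmem]
  omega

def bwHammingDist (m i j : ℕ) : ℕ := ((Finset.range m).filter fun l => bwBit i l ≠ bwBit j l).card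

lemma bwHammingDist_le (m i j : ℕ) : bwHammingDist m i j ≤ m :=
  (Finset.card_filter_le _ _).trans (Finset.card_range m).le

lemma bwHammingDist_self (m i : ℕ) : bwHammingDist m i i = 0 := by
  simp [bwHammingDist]

lemma even_bwPar_add_bwPar_add_bwHammingDist (m i j : ℕ) :
    Even (bwPar m i + bwPar m j + bwHammingDist m i j) := by
  have hbits : Even (((Finset.range m).filter fun l => bwBit i l = 0).card +
      ((Finset.range m).filter fun l => bwBit j l = 0).card + bwHammingDist m i j) := by
    unfold bwHammingDist
    simp only [Finset.card_filter, ← Finset.sum_add_distrib]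
    refine Finset.even_sum _ fun l _ => ?_
    rcases Nat.le_one_iff_eq_zero_or_eq_one.mp (bwBit_le_one i l) with hi | hi <;>
      rcases Nat.le_one_iff_eq_zero_or_eq_one.mp (bwBit_le_one j l) with hj | hj <;>
      simp [hi, hj]
  unfold bwPar
  rw [Nat.even_iff] at hbits ⊢
  omega

lemma bwExp_eq_s3 {m : ℕ} (hme : Even m) (i j : ℕ) :
    bwExp m i j = bwPar m i + bwPar m j + m - bwHammingDist m i j := by
  have hterm : ∀ l ∈ Finset.range m,
      2 * (bwBit i l : ℤ) * bwBit j l - bwBit i l - bwBit j l + 2 =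
        2 - if bwBit i l ≠ bwBit j l then 1 else 0 := by
    intro l _
    rcases Nat.le_one_iff_eq_zero_or_eq_one.mp (bwBit_le_one i l) with hi | hi <;>
      rcases Nat.le_one_iff_eq_zero_or_eq_one.mp (bwBit_le_one j l) with hj | hj <;>
      simp [hi, hj]
  have hsum : ∑ l ∈ Finset.range m, (2 * (bwBit i l : ℤ) * bwBit j l - bwBit i l - bwBit j l + 2) =
      2 * m - bwHammingDist m i j := by
    rw [Finset.sum_congr rfl hterm, Finset.sum_sub_distrib, Finset.sum_boole]
    simp [bwHammingDist, mul_comm]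
  obtain ⟨c, rfl⟩ := hme
  rw [bwExp, hsum, show (c + c + 1) / 2 = c by omega]
  push_cast
  ring

lemma even_bwExp {m : ℕ} (hme : Even m) (i j : ℕ) : Even (bwExp m i j) := by
  have hpar := even_bwPar_add_bwPar_add_bwHammingDist m i j
  rw [bwExp_eq_s3 hme, Int.even_iff]
  rw [Nat.even_iff] at hpar hme
  omega

lemma bwExp_nonneg {m : ℕ} (hme : Even m) (i j : ℕ) : 0 ≤ bwExp m i j := by
  rw [bwExp_eq_s3 hme]
  have := bwHammingDist_le m i j
  omega

lemma sqrt_two_zpow_of_even {e : ℤ} (he : Even e) (h0 : 0 ≤ e) :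
    Real.sqrt 2 ^ e = ((2 ^ (e / 2).toNat : ℤ) : ℝ) := by
  obtain ⟨c, rfl⟩ := he
  have hc : c + c = 2 * (c.toNat : ℤ) := by omega
  rw [hc, _root_.zpow_mul, zpow_ofNat, Real.sq_sqrt zero_le_two,
    Int.mul_ediv_cancel_left _ two_ne_zero, Int.toNat_natCast]
  push_cast
  rfl

def bwHInt (m : ℕ) : Matrix (Fin (2 ^ m)) (Fin (2 ^ m)) ℤ :=
  Matrix.of fun i j =>
    if j < i then 2 ^ (bwExp m i j / 2).toNat
    else if i = j then 2 ^ ((bwExp m i i - 2) / 2).toNat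
    else 0

lemma bwH_eq_map_bwHInt {m : ℕ} (hme : Even m) (hm : 2 ≤ m) :
    bwH m = (bwHInt m).map (Int.cast : ℤ → ℝ) := by
  ext i j
  simp only [bwH, bwHInt, Matrix.of_apply, Matrix.map_apply]
  split_ifs with hlt heq
  · exact sqrt_two_zpow_of_even (even_bwExp hme _ _) (bwExp_nonneg hme _ _)
  · have hdiag := bwExp_eq_s3 hme i i
    have hpar := even_bwExp hme i i
    rw [bwHammingDist_self] at hdiag
    rw [Int.even_iff] at hpar
    exact sqrt_two_zpow_of_even (by rw [Int.even_iff]; omega) (by omega)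
  · simp

lemma bwPar_eq_zero_of_odd_bwHInt {m : ℕ} (hme : Even m) (hm : 2 ≤ m) {k l : Fin (2 ^ m)}
    (hodd : Odd (bwHInt m k l)) : bwPar m k = 0 ∧ bwPar m l = 0 := by
  have hexp {n : ℕ} (hn : Odd ((2 : ℤ) ^ n)) : n = 0 := (Int.odd_pow.mp hn).resolve_left (by decide)
  have hk := bwPar_le_one m k
  have hl := bwPar_le_one m l
  simp only [bwHInt, Matrix.of_apply] at hodd
  split_ifs at hodd with hlt heq
  · have h0 := hexp hodd
    have hkl := bwExp_eq_s3 hme k l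
    have hdist := bwHammingDist_le m k l
    have hpar := Int.even_iff.mp (even_bwExp hme k l)
    omega
  · subst heq
    have h0 := hexp hodd
    have hkk := bwExp_eq_s3 hme k k
    rw [bwHammingDist_self] at hkk
    omega
  · simp at hodd

lemma bwPar_eq_one_of_odd_bwSigma_sub_one {m a r : ℕ} {i k : Fin (2 ^ m)}
    (hodd : Odd ((bwSigma m a r - 1) i k)) : bwPar m k = 1 := by
  have hb_lt {x : ℕ} (hx : x + 2 ^ (m - a) < 2 ^ m) : m - a < m :=
    (Nat.pow_lt_pow_iff_right (a := 2) (by norm_num)).mp (by omega)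
  by_cases hki : k = i
  · subst hki
    -- the diagonal entries of `Σ - 1` are `0` or `-2`
    have hne : (k : ℕ) ≠ k + 2 ^ (m - a) := by have := Nat.two_pow_pos (m - a); omega
    simp only [bwSigma, Matrix.sub_apply, Matrix.one_apply_eq, Matrix.of_apply] at hodd
    split_ifs at hodd <;> simp_all [Int.odd_iff]
  simp only [bwSigma, Matrix.sub_apply, Matrix.one_apply_ne' hki, Matrix.of_apply] at hodd
  split_ifs at hodd with hr hbit hk hbit hk <;>
    simp only [zero_add, sub_zero, Int.not_odd_zero] at hodd
  · have hpi : bwPar m i = 0 := (Int.odd_pow.mp hodd).resolve_left (by decide)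
    have hflip := bwPar_add_two_pow_s3 (hb_lt (hk ▸ k.isLt)) hbit
    rw [← hk] at hflip
    omega
  · have hpi : bwPar m i = 0 := (Int.odd_pow.mp hodd).resolve_left (by decide)
    have hbit_k : bwBit k (m - a) = 0 := by
      have := bwBit_add_two_pow_self k (m - a)
      rw [hk, hbit] at this
      have := bwBit_le_one k (m - a)
      omega
    have hflip := bwPar_add_two_pow_s3 (hb_lt (hk ▸ i.isLt)) hbit_k
    rw [hk] at hflip
    omega

theorem Matrix.mul_mul_transpose_eq_self_of_support {R n : Type*} [Ring R] [Fintype n]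
    [DecidableEq n] {S H : Matrix n n R} (t : n → Prop) (hS : ∀ i k, (S - 1) i k ≠ 0 → t k)
    (hH : ∀ k l, H k l ≠ 0 → ¬ t k ∧ ¬ t l) : S * H * Sᵀ = H := by
  have hleft : (S - 1) * H = 0 := by
    ext i j
    simp only [Matrix.mul_apply, Matrix.zero_apply]
    refine Finset.sum_eq_zero fun k _ => ?_
    by_cases hik : (S - 1) i k = 0
    · rw [hik, zero_mul]
    · by_contra hkj
      exact (hH k j (right_ne_zero_of_mul hkj)).1 (hS i k hik)
  have hright : H * (S - 1)ᵀ = 0 := by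
    ext i j
    simp only [Matrix.mul_apply, Matrix.zero_apply, Matrix.transpose_apply]
    refine Finset.sum_eq_zero fun k _ => ?_
    by_cases hjk : (S - 1) j k = 0
    · rw [hjk, mul_zero]
    · by_contra hik
      exact (hH i k (left_ne_zero_of_mul hik)).2 (hS j k hjk)
  rw [sub_mul, one_mul, sub_eq_zero] at hleft
  rw [Matrix.transpose_sub, Matrix.transpose_one, mul_sub, mul_one, sub_eq_zero] at hright
  rw [hleft, hright]

lemma bwBMat_eq_map {m : ℕ} {Hint : Matrix (Fin (2 ^ m)) (Fin (2 ^ m)) ℤ}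
    (hH : bwH m = Hint.map (Int.cast : ℤ → ℝ)) (S : Matrix (Fin (2 ^ m)) (Fin (2 ^ m)) ℤ) :
    bwBMat m S = (Hint - S * Hint * Sᵀ).map (Int.cast : ℤ → ℝ) := by
  simp only [bwBMat, hH, ← Int.coe_castRingHom, ← RingHom.mapMatrix_apply, map_sub, map_mul]
  rfl

lemma bwBMat_bwSigma_even {m : ℕ} (hme : Even m) (hm : 2 ≤ m) (a r : ℕ) (i j : Fin (2 ^ m)) :
    ∃ k : ℤ, bwBMat m (bwSigma m a r) i j = 2 * k := by
  set S := bwSigma m a r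
  set f := (Int.castRingHom (ZMod 2)).mapMatrix (m := Fin (2 ^ m))
  have hodd {x : ℤ} (hx : (x : ZMod 2) ≠ 0) : Odd x :=
    Int.not_even_iff_odd.mp (mt ZMod.intCast_eq_zero_iff_even.mpr hx)
  have hfix : f S * f (bwHInt m) * (f S)ᵀ = f (bwHInt m) :=
    Matrix.mul_mul_transpose_eq_self_of_support (fun k => bwPar m k = 1)
      (fun i k hik => by
        rw [← map_one f, ← map_sub] at hik
        exact bwPar_eq_one_of_odd_bwSigma_sub_one (hodd hik))
      (fun k l hkl => by
        have := bwPar_eq_zero_of_odd_bwHInt hme hm (hodd hkl)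
        omega)
  have hD : f (bwHInt m - S * bwHInt m * Sᵀ) = 0 := by
    have htranspose : f Sᵀ = (f S)ᵀ := Matrix.transpose_map.symm
    rw [map_sub, map_mul, map_mul, htranspose, hfix, sub_self]
  obtain ⟨k, hk⟩ := (ZMod.intCast_eq_zero_iff_even).mp (congrFun₂ hD i j)
  exact ⟨k, by rw [bwBMat_eq_map (bwH_eq_map_bwHInt hme hm), Matrix.map_apply, hk]; push_cast; ring⟩

lemma bwU_eq_one_of_even {m : ℕ} {S : Matrix (Fin (2 ^ m)) (Fin (2 ^ m)) ℤ}
    (hS : ∀ i j : Fin (2 ^ m), j < i → ∃ k : ℤ, bwBMat m S i j = 2 * k) (α : Fin (2 ^ m) → ℤ) :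
    bwU m S α = 1 := by
  have hmem : bwBQuad m S α α ∈ AddSubgroup.zmultiples (2 : ℝ) := by
    refine AddSubgroup.sum_mem _ fun i _ => AddSubgroup.sum_mem _ fun j _ => ?_
    split_ifs with hji
    · obtain ⟨k, hk⟩ := hS i j hji
      exact AddSubgroup.mem_zmultiples_iff.mpr
        ⟨α i * α j * k, by rw [hk, zsmul_eq_mul]; push_cast; ring⟩
    · exact zero_mem _
  obtain ⟨n, hn⟩ := AddSubgroup.mem_zmultiples_iff.mp hmem
  rw [bwU, ← hn, zsmul_eq_mul, show Real.pi * (n * 2) = n * (2 * Real.pi) by ring]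
  exact Real.cos_int_mul_two_pi n

theorem bwU_trivial_even_case_general (m : ℕ) (hm : 4 ≤ m) (hme : Even m) (a r : ℕ) :
    (∀ α : Fin (2 ^ m) → ℤ, bwU m (bwSigma m a r) α = 1) ∧
    (∀ i j : Fin (2 ^ m), j < i → ∃ k : ℤ, bwBMat m (bwSigma m a r) i j = 2 * k) := by
  have heven : ∀ i j : Fin (2 ^ m), j < i → ∃ k : ℤ, bwBMat m (bwSigma m a r) i j = 2 * k :=
    fun i j _ => bwBMat_bwSigma_even hme (by omega) a r i j
  exact ⟨bwU_eq_one_of_even heven, heven⟩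

/-- For `m ≥ 4` even, `u_{Σ_{ar}}(α) = 1` for all `α`; equivalently all entries of
`H - Σ_{ar} H Σ_{ar}ᵀ` below the diagonal are even. -/
theorem bwU_trivial_even_case (m : ℕ) (hm : 4 ≤ m) (hme : Even m) (a r : ℕ)
    (ha : 1 ≤ a) (ha' : a ≤ m) (hr : r = 1 ∨ r = 2) :
    (∀ α : Fin (2 ^ m) → ℤ, bwU m (bwSigma m a r) α = 1) ∧
    (∀ i j : Fin (2 ^ m), j < i → ∃ k : ℤ, bwBMat m (bwSigma m a r) i j = 2 * k) :=
  bwU_trivial_even_case_general m hm hme a r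
end

section
/- Let m ≥ 2 and write σ₀ = 1₂ and σ₃ = σ₁σ₂. Every element of E(m), i.e. every matrix of the form ±σ_{i₁} ⊗ ⋯ ⊗ σ_{iₘ} with i_k ∈ {0,1,2,3}, is conjugate by an orthogonal matrix lying in the normalizer of E(m) in O(2^m, ℝ) to one of the four matrices: the identity I, −I, σ₂ ⊗ 1₂ ⊗ ⋯ ⊗ 1₂, or σ₃ ⊗ 1₂ ⊗ ⋯ ⊗ 1₂. -/
/-!
Write `W(x, z) = ⊗ₐ σ₁^{x a} σ₂^{z a}` for `x, z ∈ 𝔽₂^m`. Then `E(m) = {±W(x, z)}` and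
`W(x, z) W(x', z') = (-1)^{z·x'} W(x + x', z + z')`, so conjugating `W(x, z)` by an element of the
normalizer of `E(m)` moves the label `(x, z)` and possibly the sign. Three kinds of orthogonal
matrices normalize `E(m)`: the permutation matrix of a transvection `v ↦ v + (c·v) u` of `𝔽₂^m`
(with `c·u = 0`), acting by `(x, z) ↦ (x + (c·x) u, z + (u·z) c)`; a Hadamard matrix on one tensor
factor, which swaps `x a` and `z a`; and `E(m)` itself, which only changes signs. With these moves
every nonzero label is brought to `(0, e₀)` or `(e₀, e₀)`, and a final conjugation by `W(e₀, 0)`,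
which anticommutes with both, corrects the sign.
-/

open Matrix

/-- The type of `2^m × 2^m` real matrices, with rows and columns indexed by `𝔽₂^m`. -/
abbrev EMat (m : ℕ) := Matrix (Fin m → Fin 2) (Fin m → Fin 2) ℝ

/-- `pauliR 0 = 1₂`, `pauliR 1 = σ₁`, `pauliR 2 = σ₂`, `pauliR 3 = σ₃ = σ₁ σ₂`. -/
noncomputable def pauliR : Fin 4 → Matrix (Fin 2) (Fin 2) ℝ :=
  ![1, !![0, 1; 1, 0], !![1, 0; 0, -1], !![0, 1; 1, 0] * !![1, 0; 0, -1]]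

/-- The Kronecker (tensor) product of `m` matrices of size `2 × 2`. -/
noncomputable def kprod (m : ℕ) (f : Fin m → Matrix (Fin 2) (Fin 2) ℝ) : EMat m :=
  Matrix.of fun i j => ∏ a, f a (i a) (j a)

/-- The extraspecial group `E(m) = 2_+^{2m+1}`, realized as the set of matrices
`± σ_{i₁} ⊗ ⋯ ⊗ σ_{iₘ}` with each factor in `{1₂, σ₁, σ₂, σ₁σ₂}`. -/
noncomputable def Esp (m : ℕ) : Finset (EMat m) :=
  @Finset.image _ _ (Classical.decEq _)
    (fun p : Bool × (Fin m → Fin 4) =>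
      (if p.1 then (-1 : EMat m) else 1) * kprod m fun b => pauliR (p.2 b))
    Finset.univ

open Fin.CommRing

section Kronecker

variable {m : ℕ}

lemma kprod_mul (f g : Fin m → Matrix (Fin 2) (Fin 2) ℝ) :
    kprod m f * kprod m g = kprod m fun a => f a * g a := by
  ext i k
  simp only [kprod, mul_apply, of_apply]
  rw [Fintype.prod_sum fun a p => f a (i a) p * g a p (k a)]
  exact Finset.sum_congr rfl fun x _ => Finset.prod_mul_distrib.symm

lemma kprod_transpose (f : Fin m → Matrix (Fin 2) (Fin 2) ℝ) :
    (kprod m f)ᵀ = kprod m fun a => (f a)ᵀ := rfl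

lemma kprod_smul (c : Fin m → ℝ) (f : Fin m → Matrix (Fin 2) (Fin 2) ℝ) :
    kprod m (fun a => c a • f a) = (∏ a, c a) • kprod m f := by
  ext i j
  simp [kprod, Finset.prod_mul_distrib]

end Kronecker

lemma transpose_permMatrix_mul_mul_permMatrix {n : Type*} [Fintype n] [DecidableEq n]
    (σ : Equiv.Perm n) (A : Matrix n n ℝ) :
    (σ.permMatrix ℝ)ᵀ * A * σ.permMatrix ℝ = A.submatrix σ.symm σ.symm := by
  rw [transpose_permMatrix, PEquiv.toMatrix_toPEquiv_mul, PEquiv.mul_toMatrix_toPEquiv,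
    submatrix_submatrix]
  rfl

def signChar : AddChar (Fin 2) ℝ where
  toFun b := (-1) ^ (b : ℕ)
  map_zero_eq_one' := pow_zero _
  map_add_eq_mul' a b := by fin_cases a <;> fin_cases b <;> norm_num

@[simp] lemma signChar_one : signChar 1 = -1 := by simp [signChar]

lemma signChar_sum {ι : Type*} (s : Finset ι) (f : ι → Fin 2) :
    signChar (∑ i ∈ s, f i) = ∏ i ∈ s, signChar (f i) :=
  map_prod signChar.toMonoidHom (fun i => Multiplicative.ofAdd (f i)) s

/-- `pauliXZ x z = σ₁^x σ₂^z`. -/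
noncomputable def pauliXZ (x z : Fin 2) : Matrix (Fin 2) (Fin 2) ℝ :=
  of fun i j => if i = j + x then signChar (z * j) else 0

lemma pauliXZ_mul (x z x' z' : Fin 2) :
    pauliXZ x z * pauliXZ x' z' = signChar (z * x') • pauliXZ (x + x') (z + z') := by
  ext i j
  fin_cases x <;> fin_cases z <;> fin_cases x' <;> fin_cases z' <;> fin_cases i <;> fin_cases j <;>
    simp [pauliXZ, mul_apply]

lemma pauliXZ_transpose (x z : Fin 2) : (pauliXZ x z)ᵀ = signChar (z * x) • pauliXZ x z := by
  ext i j
  fin_cases x <;> fin_cases z <;> fin_cases i <;> fin_cases j <;> simp [pauliXZ]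

lemma pauliR_eq_pauliXZ (k : Fin 4) : pauliR k = pauliXZ (![0, 1, 0, 1] k) (![0, 0, 1, 1] k) := by
  ext i j
  fin_cases k <;> fin_cases i <;> fin_cases j <;> simp [pauliR, pauliXZ]

lemma exists_pauliR_eq_pauliXZ (x z : Fin 2) : ∃ k, pauliR k = pauliXZ x z :=
  ⟨![![0, 2], ![1, 3]] x z, by fin_cases x <;> fin_cases z <;> exact pauliR_eq_pauliXZ _⟩

noncomputable def hadamard2 : Matrix (Fin 2) (Fin 2) ℝ := (√2)⁻¹ • !![1, 1; 1, -1]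

lemma hadamard2_transpose : hadamard2ᵀ = hadamard2 := by
  ext i j
  fin_cases i <;> fin_cases j <;> simp [hadamard2]

lemma hadamard2_conj_pauliXZ (x z : Fin 2) :
    hadamard2 * pauliXZ x z * hadamard2 = signChar (x * z) • pauliXZ z x := by
  ext i j
  fin_cases x <;> fin_cases z <;> fin_cases i <;> fin_cases j <;>
    simp [hadamard2, pauliXZ, mul_apply, Fin.sum_univ_two, vecHead, vecTail] <;> ring_nf <;> simp

section Weyl

variable {m : ℕ}

lemma add_self_eq_zero_fin_two (x : Fin m → Fin 2) : x + x = 0 :=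
  funext fun a => CharTwo.add_self_eq_zero (x a)

/-- `weyl x z = ⊗ₐ σ₁^{x a} σ₂^{z a}`. -/
noncomputable def weyl (x z : Fin m → Fin 2) : EMat m := kprod m fun a => pauliXZ (x a) (z a)

lemma weyl_apply (x z i j : Fin m → Fin 2) :
    weyl x z i j = if i = j + x then signChar (z ⬝ᵥ j) else 0 := by
  simp [weyl, kprod, pauliXZ, Finset.prod_ite_zero, dotProduct, signChar_sum, funext_iff]

lemma weyl_zero : weyl (0 : Fin m → Fin 2) 0 = 1 := by
  ext i j
  simp [weyl_apply, one_apply]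

lemma weyl_mul (x z x' z' : Fin m → Fin 2) :
    weyl x z * weyl x' z' = signChar (z ⬝ᵥ x') • weyl (x + x') (z + z') := by
  simp only [weyl, kprod_mul, pauliXZ_mul, kprod_smul, dotProduct, signChar_sum]
  rfl

lemma weyl_transpose (x z : Fin m → Fin 2) : (weyl x z)ᵀ = signChar (z ⬝ᵥ x) • weyl x z := by
  simp only [weyl, kprod_transpose, pauliXZ_transpose, kprod_smul, dotProduct, signChar_sum]

lemma transpose_weyl_mul_weyl_mul_weyl (v w x z : Fin m → Fin 2) :
    (weyl v w)ᵀ * weyl x z * weyl v w = signChar (w ⬝ᵥ x + z ⬝ᵥ v) • weyl x z := by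
  rw [weyl_transpose, smul_mul, weyl_mul, smul_mul, smul_mul, weyl_mul, smul_smul, smul_smul,
    add_comm v x, add_comm w z, add_assoc, add_assoc, add_self_eq_zero_fin_two,
    add_self_eq_zero_fin_two, add_zero, add_zero, ← AddChar.map_add_eq_mul,
    ← AddChar.map_add_eq_mul, add_dotProduct]
  congr 2
  linear_combination (w ⬝ᵥ v) * CharTwo.two_eq_zero (R := Fin 2)

end Weyl

lemma kprod_pauliR {m : ℕ} (p : Fin m → Fin 4) :
    kprod m (fun a => pauliR (p a)) =
      weyl (fun a => ![0, 1, 0, 1] (p a)) (fun a => ![0, 0, 1, 1] (p a)) :=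
  congrArg (kprod m) (funext fun a => pauliR_eq_pauliXZ (p a))

lemma kprod_pauliR_ite {m : ℕ} (hm : 0 < m) (k : Fin 4) :
    kprod m (fun b => pauliR (if (b : ℕ) = 0 then k else 0)) =
      weyl (Pi.single ⟨0, hm⟩ (![0, 1, 0, 1] k)) (Pi.single ⟨0, hm⟩ (![0, 0, 1, 1] k)) := by
  rw [kprod_pauliR]
  congr 1 <;> ext b <;> by_cases hb : (b : ℕ) = 0 <;> simp [hb, Pi.single_apply, Fin.ext_iff]

namespace Esp

variable {m : ℕ}

lemma mem_iff {g : EMat m} : g ∈ Esp m ↔ ∃ b x z, g = signChar b • weyl x z := by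
  simp only [Esp, Finset.mem_image, Finset.mem_univ, true_and]
  constructor
  · rintro ⟨⟨s, p⟩, rfl⟩
    refine ⟨if s then 1 else 0, fun a => ![0, 1, 0, 1] (p a), fun a => ![0, 0, 1, 1] (p a), ?_⟩
    cases s <;> simp [kprod_pauliR]
  · rintro ⟨b, x, z, rfl⟩
    choose k hk using exists_pauliR_eq_pauliXZ
    refine ⟨⟨b = 1, fun a => k (x a) (z a)⟩, ?_⟩
    have : (kprod m fun a => pauliR (k (x a) (z a))) = weyl x z :=
      congrArg (kprod m) (funext fun a => hk _ _)
    rw [this]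
    fin_cases b <;> simp

def normalizer (m : ℕ) : Submonoid (EMat m) where
  carrier := {U | U * Uᵀ = 1 ∧ Uᵀ * U = 1 ∧ ∀ h, h ∈ Esp m ↔ U * h * Uᵀ ∈ Esp m}
  mul_mem' := by
    rintro U V ⟨hU, hU', hUE⟩ ⟨hV, hV', hVE⟩
    refine ⟨?_, ?_, fun h => ?_⟩ <;> simp only [transpose_mul, Matrix.mul_assoc]
    · rw [← Matrix.mul_assoc V, hV, Matrix.one_mul, hU]
    · rw [← Matrix.mul_assoc Uᵀ, hU', Matrix.one_mul, hV']
    · rw [hVE, hUE]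
      simp only [Matrix.mul_assoc]
  one_mem' := by simp

lemma mem_normalizer_of_conj {U : EMat m} (hU : Uᵀ * U = 1)
    (hconj : ∀ x z, ∃ b x' z', Uᵀ * weyl x z * U = signChar b • weyl x' z') :
    U ∈ normalizer m := by
  classical
  have hU' : U * Uᵀ = 1 := mul_eq_one_comm.1 hU
  let φ : EMat m → EMat m := fun h => Uᵀ * h * U
  have hmaps : ∀ h ∈ Esp m, φ h ∈ Esp m := by
    intro h hh
    obtain ⟨b, x, z, rfl⟩ := mem_iff.1 hh
    obtain ⟨b', x', z', he⟩ := hconj x z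
    simp only [φ, Matrix.mul_smul, Matrix.smul_mul, he]
    exact mem_iff.2 ⟨b + b', x', z', by rw [AddChar.map_add_eq_mul, mul_smul]⟩
  have hφ_cancel : ∀ A, U * φ A * Uᵀ = A := fun A => by
    rw [show U * φ A * Uᵀ = (U * Uᵀ) * A * (U * Uᵀ) by simp only [φ, Matrix.mul_assoc], hU',
      Matrix.one_mul, Matrix.mul_one]
  have hφ : φ.Injective := fun h h' he => by
    rw [← hφ_cancel h, he, hφ_cancel]
  -- `Esp m` is finite, so the injective self-map `φ` of it is onto.
  have himage : (Esp m).image φ = Esp m :=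
    Finset.eq_of_subset_of_card_le (Finset.image_subset_iff.2 hmaps)
      (Finset.card_image_of_injective _ hφ).ge
  refine ⟨hU', hU, fun h => ⟨fun hh => ?_, fun hh => ?_⟩⟩
  · rw [← himage] at hh
    obtain ⟨h', hh', rfl⟩ := Finset.mem_image.1 hh
    rwa [hφ_cancel]
  · have hcancel : φ (U * h * Uᵀ) = h := by
      rw [show φ (U * h * Uᵀ) = (Uᵀ * U) * h * (Uᵀ * U) by simp only [φ, Matrix.mul_assoc], hU,
        Matrix.one_mul, Matrix.mul_one]
    exact hcancel ▸ hmaps _ hh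

def SignConj (g g' : EMat m) : Prop := ∃ U ∈ normalizer m, ∃ b, Uᵀ * g * U = signChar b • g'

lemma SignConj.refl (g : EMat m) : SignConj g g := ⟨1, one_mem _, 0, by simp⟩

lemma SignConj.trans {g₁ g₂ g₃ : EMat m} (h₁₂ : SignConj g₁ g₂) (h₂₃ : SignConj g₂ g₃) :
    SignConj g₁ g₃ := by
  obtain ⟨U, hU, b, hb⟩ := h₁₂
  obtain ⟨V, hV, c, hc⟩ := h₂₃
  refine ⟨U * V, mul_mem hU hV, b + c, ?_⟩
  calc (U * V)ᵀ * g₁ * (U * V) = Vᵀ * (Uᵀ * g₁ * U) * V := by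
        simp only [transpose_mul, Matrix.mul_assoc]
    _ = signChar (b + c) • g₃ := by
        rw [hb, Matrix.mul_smul, Matrix.smul_mul, hc, smul_smul, AddChar.map_add_eq_mul]

lemma SignConj.signChar_smul_left {g g' : EMat m} (h : SignConj g g') (b : Fin 2) :
    SignConj (signChar b • g) g' := by
  obtain ⟨U, hU, c, hc⟩ := h
  refine ⟨U, hU, b + c, ?_⟩
  rw [Matrix.mul_smul, Matrix.smul_mul, hc, smul_smul, AddChar.map_add_eq_mul]

lemma weyl_mem_normalizer (v w : Fin m → Fin 2) : weyl v w ∈ normalizer m :=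
  mem_normalizer_of_conj (by simpa [weyl_zero] using transpose_weyl_mul_weyl_mul_weyl v w 0 0)
    fun x z => ⟨_, x, z, transpose_weyl_mul_weyl_mul_weyl v w x z⟩

lemma transpose_permMatrix_mul_weyl_mul_permMatrix (σ : (Fin m → Fin 2) ≃+ (Fin m → Fin 2))
    (τ : (Fin m → Fin 2) → Fin m → Fin 2) (hτ : ∀ z j, τ z ⬝ᵥ σ j = z ⬝ᵥ j) (x z : Fin m → Fin 2) :
    (Equiv.Perm.permMatrix ℝ σ.toEquiv)ᵀ * weyl x z * Equiv.Perm.permMatrix ℝ σ.toEquiv =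
      weyl (σ x) (τ z) := by
  ext i j
  rw [transpose_permMatrix_mul_mul_permMatrix, submatrix_apply, weyl_apply, weyl_apply]
  have hcond : σ.symm i = σ.symm j + x ↔ i = j + σ x := by
    rw [AddEquiv.symm_apply_eq, map_add, AddEquiv.apply_symm_apply]
  have hsign : z ⬝ᵥ σ.symm j = τ z ⬝ᵥ j := by rw [← hτ, AddEquiv.apply_symm_apply]
  exact if_congr hcond (congrArg signChar hsign) rfl

lemma permMatrix_mem_normalizer (σ : (Fin m → Fin 2) ≃+ (Fin m → Fin 2))
    (τ : (Fin m → Fin 2) → Fin m → Fin 2) (hτ : ∀ z j, τ z ⬝ᵥ σ j = z ⬝ᵥ j) :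
    Equiv.Perm.permMatrix ℝ σ.toEquiv ∈ normalizer m := by
  have horth := (transpose_permMatrix_mul_mul_permMatrix σ.toEquiv 1).trans (submatrix_one_equiv _)
  rw [Matrix.mul_one] at horth
  refine mem_normalizer_of_conj horth fun x z => ⟨0, σ x, τ z, ?_⟩
  rw [transpose_permMatrix_mul_weyl_mul_permMatrix σ τ hτ, AddChar.map_zero_eq_one, one_smul]

lemma signConj_transvection {u c : Fin m → Fin 2} (h : c ⬝ᵥ u = 0) (x z : Fin m → Fin 2) :
    SignConj (weyl x z) (weyl (x + (c ⬝ᵥ x) • u) (z + (u ⬝ᵥ z) • c)) := by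
  let σ := (LinearEquiv.transvection (f := dotProductEquiv (Fin 2) (Fin m) c) (v := u) h).toAddEquiv
  have hσ : ∀ j, σ j = j + (c ⬝ᵥ j) • u := fun j => rfl
  have hτ : ∀ z j, (z + (u ⬝ᵥ z) • c) ⬝ᵥ σ j = z ⬝ᵥ j := by
    intro z j
    simp only [hσ, add_dotProduct, dotProduct_add, smul_dotProduct, dotProduct_smul, smul_eq_mul, h]
    rw [dotProduct_comm z u]
    linear_combination (u ⬝ᵥ z) * (c ⬝ᵥ j) * CharTwo.two_eq_zero (R := Fin 2)
  refine ⟨_, permMatrix_mem_normalizer σ _ hτ, 0, ?_⟩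
  rw [transpose_permMatrix_mul_weyl_mul_permMatrix σ _ hτ, AddChar.map_zero_eq_one, one_smul, hσ]

noncomputable def hadamard (a : Fin m) : EMat m := kprod m fun b => if b = a then hadamard2 else 1

lemma transpose_hadamard_mul_weyl_mul_hadamard (a : Fin m) (x z : Fin m → Fin 2) :
    (hadamard a)ᵀ * weyl x z * hadamard a =
      signChar (x a * z a) • weyl (Function.update x a (z a)) (Function.update z a (x a)) := by
  have hfactor : ∀ b, (if b = a then hadamard2 else 1)ᵀ * pauliXZ (x b) (z b) *
      (if b = a then hadamard2 else 1) = (if b = a then signChar (x a * z a) else 1) •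
        pauliXZ (Function.update x a (z a) b) (Function.update z a (x a) b) := by
    intro b
    rcases eq_or_ne b a with rfl | hb
    · simp [hadamard2_transpose, hadamard2_conj_pauliXZ]
    · simp [hb]
  simp only [hadamard, weyl, kprod_transpose, kprod_mul, hfactor, kprod_smul,
    Fintype.prod_ite_eq']

lemma signConj_hadamard (a : Fin m) (x z : Fin m → Fin 2) :
    SignConj (weyl x z) (weyl (Function.update x a (z a)) (Function.update z a (x a))) :=
  ⟨hadamard a, mem_normalizer_of_conj
    (by simpa [weyl_zero] using transpose_hadamard_mul_weyl_mul_hadamard a 0 0)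
    fun x z => ⟨_, _, _, transpose_hadamard_mul_weyl_mul_hadamard a x z⟩,
    _, transpose_hadamard_mul_weyl_mul_hadamard a x z⟩

lemma signConj_of_dotProduct_left {c x y : Fin m → Fin 2} (hx : c ⬝ᵥ x = 1) (hy : c ⬝ᵥ y = 1)
    (z : Fin m → Fin 2) : SignConj (weyl x z) (weyl y (z + ((x + y) ⬝ᵥ z) • c)) := by
  have h : c ⬝ᵥ (x + y) = 0 := by rw [dotProduct_add, hx, hy]; rfl
  simpa [hx, ← add_assoc, add_self_eq_zero_fin_two] using signConj_transvection h x z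

lemma signConj_of_dotProduct_right {u z y : Fin m → Fin 2} (hz : u ⬝ᵥ z = 1) (hy : u ⬝ᵥ y = 1)
    (x : Fin m → Fin 2) : SignConj (weyl x z) (weyl (x + ((z + y) ⬝ᵥ x) • u) y) := by
  have h : (z + y) ⬝ᵥ u = 0 := by rw [dotProduct_comm, dotProduct_add, hz, hy]; rfl
  simpa [hz, ← add_assoc, add_self_eq_zero_fin_two] using signConj_transvection h x z

lemma exists_dotProduct_eq_one {x : Fin m → Fin 2} (hx : x ≠ 0) (a₀ : Fin m) :
    ∃ c : Fin m → Fin 2, c ⬝ᵥ x = 1 ∧ c a₀ = 1 := by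
  obtain ⟨a, ha⟩ := Function.ne_iff.1 hx
  replace ha : x a = 1 := Fin.eq_one_of_ne_zero _ ha
  by_cases h₀ : x a₀ = 1
  · exact ⟨Pi.single a₀ 1, by simp [h₀], by simp⟩
  · have hne : a ≠ a₀ := by rintro rfl; exact h₀ ha
    refine ⟨Pi.single a 1 + Pi.single a₀ 1, ?_, by simp [hne]⟩
    have : x a₀ = 0 := not_imp_comm.1 (Fin.eq_one_of_ne_zero _) h₀
    simp [add_dotProduct, ha, this]

lemma exists_signConj_left_ne_zero {x z : Fin m → Fin 2} (hxz : ¬(x = 0 ∧ z = 0)) :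
    ∃ x' z', x' ≠ 0 ∧ SignConj (weyl x z) (weyl x' z') := by
  by_cases hx : x = 0
  · obtain ⟨a, ha⟩ := Function.ne_iff.1 fun hz => hxz ⟨hx, hz⟩
    refine ⟨_, _, fun h => ha ?_, signConj_hadamard a x z⟩
    simpa using congrFun h a
  · exact ⟨x, z, hx, SignConj.refl _⟩

theorem signConj_canonical_form (a₀ : Fin m) {x z : Fin m → Fin 2} (hxz : ¬(x = 0 ∧ z = 0)) :
    SignConj (weyl x z) (weyl 0 (Pi.single a₀ 1)) ∨
      SignConj (weyl x z) (weyl (Pi.single a₀ 1) (Pi.single a₀ 1)) := by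
  set e : Fin m → Fin 2 := Pi.single a₀ 1
  have hee : e ⬝ᵥ e = 1 := by simp [e]
  obtain ⟨x', z', hx', h₁⟩ := exists_signConj_left_ne_zero hxz
  obtain ⟨c, hcx, hc⟩ := exists_dotProduct_eq_one hx' a₀
  have h₂ := h₁.trans (signConj_of_dotProduct_left (y := e) hcx (by simpa [e] using hc) z')
  set w := z' + ((x' + e) ⬝ᵥ z') • c
  by_cases hw : w a₀ = 1
  · right
    have hew : e ⬝ᵥ w = 1 := by simpa [e] using hw
    simpa [e, hw] using h₂.trans (signConj_of_dotProduct_right hew hee e)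
  · left
    have hw₀ : w a₀ = 0 := not_imp_comm.1 (Fin.eq_one_of_ne_zero _) hw
    have he₀ : Function.update e a₀ (w a₀) = 0 := by simp [e, hw₀, Pi.single, Function.update_idem]
    have hew : e ⬝ᵥ Function.update w a₀ (e a₀) = 1 := by simp [e]
    have h₃ := h₂.trans (signConj_hadamard a₀ e w)
    rw [he₀] at h₃
    simpa using h₃.trans (signConj_of_dotProduct_right hew hee 0)

lemma exists_conj_eq_of_signConj {g : EMat m} {x z v : Fin m → Fin 2}
    (h : SignConj g (weyl x z)) (hv : z ⬝ᵥ v = 1) :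
    ∃ U ∈ normalizer m, Uᵀ * g * U = weyl x z := by
  obtain ⟨U, hU, b, hb⟩ := h
  fin_cases b
  · exact ⟨U, hU, by simpa using hb⟩
  · refine ⟨U * weyl v 0, mul_mem hU (weyl_mem_normalizer v 0), ?_⟩
    calc (U * weyl v 0)ᵀ * g * (U * weyl v 0) = (weyl v 0)ᵀ * (Uᵀ * g * U) * weyl v 0 := by
          simp only [transpose_mul, Matrix.mul_assoc]
      _ = weyl x z := by
          rw [hb, Matrix.mul_smul, Matrix.smul_mul, transpose_weyl_mul_weyl_mul_weyl, hv]
          simp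

end Esp

theorem esp_conjugacy_representatives_general (m : ℕ) :
    ∀ g ∈ Esp m, ∃ U : EMat m,
      U * Uᵀ = 1 ∧ Uᵀ * U = 1 ∧
      (∀ h : EMat m, h ∈ Esp m ↔ U * h * Uᵀ ∈ Esp m) ∧
      (Uᵀ * g * U = 1 ∨ Uᵀ * g * U = -1 ∨
        Uᵀ * g * U = kprod m (fun b => pauliR (if (b : ℕ) = 0 then 2 else 0)) ∨
        Uᵀ * g * U = kprod m (fun b => pauliR (if (b : ℕ) = 0 then 3 else 0))) := by
  intro g hg
  obtain ⟨b, x, z, rfl⟩ := Esp.mem_iff.1 hg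
  by_cases hxz : x = 0 ∧ z = 0
  · obtain ⟨rfl, rfl⟩ := hxz
    refine ⟨1, by simp, by simp, by simp, ?_⟩
    fin_cases b <;> simp [weyl_zero]
  have hm : 0 < m := Nat.pos_of_ne_zero fun hm =>
    hxz (by subst hm; exact ⟨Subsingleton.elim _ _, Subsingleton.elim _ _⟩)
  set e : Fin m → Fin 2 := Pi.single ⟨0, hm⟩ 1
  have hee : e ⬝ᵥ e = 1 := by simp [e]
  rw [show kprod m _ = weyl 0 e by simpa using kprod_pauliR_ite hm 2,
    show kprod m _ = weyl e e by simpa using kprod_pauliR_ite hm 3]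
  rcases Esp.signConj_canonical_form ⟨0, hm⟩ hxz with h | h <;>
    obtain ⟨U, ⟨hU, hU', hUE⟩, hconj⟩ := Esp.exists_conj_eq_of_signConj (h.signChar_smul_left b) hee
  · exact ⟨U, hU, hU', hUE, Or.inr (Or.inr (Or.inl hconj))⟩
  · exact ⟨U, hU, hU', hUE, Or.inr (Or.inr (Or.inr hconj))⟩

/-- Every element of `E(m)` (`m ≥ 2`) is conjugate, by an orthogonal matrix lying in the
normalizer of `E(m)` in `O(2^m, ℝ)`, to one of `I`, `-I`, `σ₂ ⊗ 1₂ ⊗ ⋯ ⊗ 1₂`,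
`σ₃ ⊗ 1₂ ⊗ ⋯ ⊗ 1₂`. -/
theorem esp_conjugacy_representatives (m : ℕ) (hm : 2 ≤ m) :
    ∀ g ∈ Esp m, ∃ U : EMat m,
      U * Uᵀ = 1 ∧ Uᵀ * U = 1 ∧
      (∀ h : EMat m, h ∈ Esp m ↔ U * h * Uᵀ ∈ Esp m) ∧
      (Uᵀ * g * U = 1 ∨ Uᵀ * g * U = -1 ∨
        Uᵀ * g * U = kprod m (fun b => pauliR (if (b : ℕ) = 0 then 2 else 0)) ∨
        Uᵀ * g * U = kprod m (fun b => pauliR (if (b : ℕ) = 0 then 3 else 0))) :=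
  esp_conjugacy_representatives_general m
end

section
/- Let U be a nonzero finite-dimensional complex vector space, N a finite group, and ρ : N → GL(U) a projective representation (ρ(α)ρ(β) = P(α,β)ρ(αβ) with P(α,β) ∈ ℂˣ) that is irreducible, i.e. the only subspaces of U invariant under all ρ(α) are 0 and U. Let g, h be automorphisms of N (written on the right) and suppose that for each x ∈ {g, h, gh} there is an invertible linear map T_x : U → U and a function B_x : N → ℂˣ with T_x ρ(αx) T_x⁻¹ = B_x(α) ρ(α) for all α ∈ N. If B_h(α) B_g(αh) B_{gh}(α)⁻¹ = 1 for all α ∈ N, then there exists a scalar λ ∈ ℂˣ such that T_g T_h = λ T_{gh}. -/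
/-- Let `ρ` be an irreducible projective representation of a finite group `N` on a nonzero
finite-dimensional complex vector space `U`, let `g, h` be automorphisms of `N` (written on
the right, with composite `gh` mapping `α ↦ (αh)g`), and for each `x ∈ {g, h, gh}` let `T_x`
be an invertible linear map with `T_x ρ(αx) T_x⁻¹ = B_x(α) ρ(α)` for all `α`.
If `B_h(α) B_g(αh) B_{gh}(α)⁻¹ = 1` for all `α`, then `T_g T_h = λ T_{gh}` for some scalar
`λ ≠ 0` (operator products being taken in the right-action convention). -/
theorem intertwiner_product_scalar {N : Type*} [Group N] [Fintype N]
    {U : Type*} [AddCommGroup U] [Module ℂ U] [FiniteDimensional ℂ U] [Nontrivial U]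
    (ρ : N → (U ≃ₗ[ℂ] U)) (P : N → N → ℂˣ)
    (hρ : ∀ α β : N,
      (ρ α).toLinearMap ∘ₗ (ρ β).toLinearMap = (P α β : ℂ) • (ρ (α * β)).toLinearMap)
    (hirr : ∀ W : Submodule ℂ U, (∀ α : N, ∀ u ∈ W, ρ α u ∈ W) → W = ⊥ ∨ W = ⊤)
    (g h : N ≃* N) (Tg Th Tgh : U ≃ₗ[ℂ] U) (Bg Bh Bgh : N → ℂˣ)
    (hTg : ∀ α : N, Tg.toLinearMap ∘ₗ (ρ (g α)).toLinearMap =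
      (Bg α : ℂ) • ((ρ α).toLinearMap ∘ₗ Tg.toLinearMap))
    (hTh : ∀ α : N, Th.toLinearMap ∘ₗ (ρ (h α)).toLinearMap =
      (Bh α : ℂ) • ((ρ α).toLinearMap ∘ₗ Th.toLinearMap))
    (hTgh : ∀ α : N, Tgh.toLinearMap ∘ₗ (ρ (g (h α))).toLinearMap =
      (Bgh α : ℂ) • ((ρ α).toLinearMap ∘ₗ Tgh.toLinearMap))
    (hcond : ∀ α : N, (Bh α : ℂ) * (Bg (h α) : ℂ) * ((Bgh α : ℂ))⁻¹ = 1) :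
    ∃ lam : ℂ, lam ≠ 0 ∧
      Th.toLinearMap ∘ₗ Tg.toLinearMap = lam • Tgh.toLinearMap := by
  -- pointwise versions of the intertwining hypotheses
  have hTg' : ∀ (α : N) (x : U), Tg (ρ (g α) x) = (Bg α : ℂ) • ρ α (Tg x) := by
    intro α x
    simpa using LinearMap.congr_fun (hTg α) x
  have hTh' : ∀ (α : N) (x : U), Th (ρ (h α) x) = (Bh α : ℂ) • ρ α (Th x) := by
    intro α x
    simpa using LinearMap.congr_fun (hTh α) x
  have hTgh' : ∀ (α : N) (x : U), Tgh (ρ (g (h α)) x) = (Bgh α : ℂ) • ρ α (Tgh x) := by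
    intro α x
    simpa using LinearMap.congr_fun (hTgh α) x
  -- the symm version
  have hTghsymm : ∀ (α : N) (u : U),
      Tgh.symm (ρ α u) = ((Bgh α : ℂ))⁻¹ • ρ (g (h α)) (Tgh.symm u) := by
    intro α u
    have := hTgh' α (Tgh.symm u)
    rw [Tgh.apply_symm_apply] at this
    apply Tgh.injective
    rw [Tgh.apply_symm_apply, map_smul, this, smul_smul,
      inv_mul_cancel₀ (Bgh α).ne_zero, one_smul]
  set A : U →ₗ[ℂ] U :=
    Th.toLinearMap ∘ₗ Tg.toLinearMap ∘ₗ Tgh.symm.toLinearMap with hA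
  have hApt : ∀ u : U, A u = Th (Tg (Tgh.symm u)) := fun u => rfl
  have hcomm : ∀ (α : N) (u : U), A (ρ α u) = ρ α (A u) := by
    intro α u
    have hc : ((Bgh α : ℂ))⁻¹ * (Bg (h α) : ℂ) * (Bh α : ℂ) = 1 := by
      rw [← hcond α]; ring
    rw [hApt, hApt, hTghsymm, map_smul, map_smul, hTg' (h α), map_smul, hTh' α,
      smul_smul, smul_smul, hc, one_smul]
  -- Schur: A is a scalar
  obtain ⟨c, hc⟩ := Module.End.exists_eigenvalue A
  have hinv : ∀ α : N, ∀ u ∈ Module.End.eigenspace A c, ρ α u ∈ Module.End.eigenspace A c := by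
    intro α u hu
    rw [Module.End.mem_eigenspace_iff] at hu ⊢
    rw [hcomm, hu, map_smul]
  have hW : Module.End.eigenspace A c = ⊤ := by
    rcases hirr (Module.End.eigenspace A c) hinv with hbot | htop
    · exact absurd hbot hc
    · exact htop
  have hAeq : ∀ u : U, A u = c • u := by
    intro u
    have : u ∈ Module.End.eigenspace A c := hW ▸ Submodule.mem_top
    exact Module.End.mem_eigenspace_iff.mp this
  have hcne : c ≠ 0 := by
    intro h0
    obtain ⟨u, hu⟩ := exists_ne (0 : U)
    have := hAeq u
    rw [h0, zero_smul, hApt] at this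
    exact hu (by simpa using Tgh.symm.injective (Tg.injective (Th.injective
      (by simpa using this))))
  refine ⟨c, hcne, ?_⟩
  ext v
  have := hAeq (Tgh v)
  rw [hApt, Tgh.symm_apply_apply] at this
  simpa using this
end
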